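/- Axiom I-2bis fails in the log-euclidean plane: there exist a log-euclidean line L and distinct points A, B ∈ L such that the image of the geodesic from A to B is not contained in L. -/

import Mathlib

open Complex Set

/-- A path `γ : [0,1] → ℂ` is piecewise C¹: continuous on `[0,1]` and C¹ on the
pieces of a finite partition `0 = s 0 < s 1 < ⋯ < s n = 1`. -/
def PiecewiseC1 (γ : ℝ → ℂ) : Prop :=
  ContinuousOn γ (Set.Icc 0 1) ∧
    ∃ (n : ℕ) (s : Fin (n + 1) → ℝ), StrictMono s ∧ s 0 = 0 ∧ s (Fin.last n) = 1 ∧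
      ∀ i : Fin n, ContDiffOn ℝ 1 γ (Set.Icc (s i.castSucc) (s i.succ))

/-- The log-euclidean length of a path: the euclidean length of `t ↦ γ(t)²`. -/
noncomputable def LELength (γ : ℝ → ℂ) : ℝ :=
  ∫ t in (0:ℝ)..1, 2 * ‖γ t‖ * ‖deriv γ t‖

/-- The log-euclidean distance: infimum of log-euclidean lengths of piecewise C¹ paths. -/
noncomputable def dLE (A B : ℂ) : ℝ :=
  sInf {L : ℝ | ∃ γ : ℝ → ℂ, PiecewiseC1 γ ∧ γ 0 = A ∧ γ 1 = B ∧ LELength γ = L}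

/-- A geodesic from `A` to `B` in the log-euclidean plane. -/
def IsLEGeodesic (A B : ℂ) (γ : ℝ → ℂ) : Prop :=
  γ 0 = A ∧ γ (dLE A B) = B ∧
    ∀ s ∈ Set.Icc (0:ℝ) (dLE A B), ∀ t ∈ Set.Icc (0:ℝ) (dLE A B),
      dLE (γ s) (γ t) = |s - t|

/-- A log-euclidean line: either (i) a connected component of the preimage under
`w ↦ w²` of an affine real line not through `0`, or (ii) the union of two closed
half-lines from `0` in distinct unit directions. -/
def IsLogLine (L : Set ℂ) : Prop :=
  (∃ p v : ℂ, v ≠ 0 ∧ (0 : ℂ) ∉ {z : ℂ | ∃ t : ℝ, z = p + t • v} ∧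
    ∃ w : ℂ, w ^ 2 ∈ {z : ℂ | ∃ t : ℝ, z = p + t • v} ∧
      L = connectedComponentIn {w : ℂ | w ^ 2 ∈ {z : ℂ | ∃ t : ℝ, z = p + t • v}} w) ∨
  (∃ u v : ℂ, u ≠ v ∧ ‖u‖ = 1 ∧ ‖v‖ = 1 ∧
    L = {z : ℂ | ∃ t : ℝ, 0 ≤ t ∧ z = t • u} ∪ {z : ℂ | ∃ t : ℝ, 0 ≤ t ∧ z = t • v})

open MeasureTheory intervalIntegral

set_option maxHeartbeats 1000000 in
/-- Lower bound: every piecewise C¹ path has log-euclidean length at least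
the euclidean distance between the squares of its endpoints. -/
theorem le_LELength (γ : ℝ → ℂ) (h : PiecewiseC1 γ) :
    ‖γ 1 ^ 2 - γ 0 ^ 2‖ ≤ LELength γ := by
  obtain ⟨hcont, n, s, hs, hs0, hs1, hC1⟩ := h
  set g : ℝ → ℝ := fun t => 2 * ‖γ t‖ * ‖deriv γ t‖ with hg
  set f' : ℝ → ℂ := fun t => 2 * γ t * deriv γ t with hf'
  have hgf' : ∀ t, g t = ‖f' t‖ := by
    intro t
    simp [hg, hf', map_mul, mul_assoc]
  -- per piece facts
  have piece : ∀ i : Fin n,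
      IntervalIntegrable f' volume (s i.castSucc) (s i.succ) ∧
      ‖γ (s i.succ) ^ 2 - γ (s i.castSucc) ^ 2‖ ≤
        ∫ t in (s i.castSucc)..(s i.succ), g t := by
    intro i
    set a := s i.castSucc
    set b := s i.succ
    have hab : a < b := hs (Fin.castSucc_lt_succ (i := i))
    have hsub : Icc a b ⊆ Icc 0 1 := by
      apply Icc_subset_Icc
      · rw [← hs0]; exact hs.monotone (Fin.zero_le _)
      · rw [← hs1]; exact hs.monotone (Fin.le_last _)
    have hγc : ContinuousOn γ (Icc a b) := hcont.mono hsub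
    have hCd : ContDiffOn ℝ 1 γ (Icc a b) := hC1 i
    have hu : UniqueDiffOn ℝ (Icc a b) := uniqueDiffOn_Icc hab
    have hD : ContinuousOn (derivWithin γ (Icc a b)) (Icc a b) :=
      hCd.continuousOn_derivWithin hu le_rfl
    have hdiff : ∀ x ∈ Ioo a b, HasDerivAt γ (deriv γ x) x := by
      intro x hx
      have h1 : DifferentiableWithinAt ℝ γ (Icc a b) x :=
        (hCd.differentiableOn one_ne_zero) x (Ioo_subset_Icc_self hx)
      have h2 : DifferentiableAt ℝ γ x :=
        h1.differentiableAt (Icc_mem_nhds hx.1 hx.2)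
      exact h2.hasDerivAt
    have hdw : ∀ x ∈ Ioo a b, derivWithin γ (Icc a b) x = deriv γ x := by
      intro x hx
      exact derivWithin_of_mem_nhds (Icc_mem_nhds hx.1 hx.2)
    -- integrability of f'
    set F : ℝ → ℂ := fun x => 2 * γ x * derivWithin γ (Icc a b) x with hF
    have hFc : ContinuousOn F (Icc a b) := by
      exact (continuousOn_const.mul hγc).mul hD
    have hFi : IntervalIntegrable F volume a b := by
      apply ContinuousOn.intervalIntegrable
      rwa [uIcc_of_le hab.le]
    have hre : volume.restrict (Ioc a b) = volume.restrict (Ioo a b) :=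
      (Measure.restrict_congr_set (Ioo_ae_eq_Ioc)).symm
    have hint : IntervalIntegrable f' volume a b := by
      rw [intervalIntegrable_iff_integrableOn_Ioc_of_le hab.le]
      unfold IntegrableOn
      rw [hre]
      have hFIoo : Integrable F (volume.restrict (Ioo a b)) := by
        have := (intervalIntegrable_iff_integrableOn_Ioc_of_le hab.le).1 hFi
        unfold IntegrableOn at this; rw [hre] at this; exact this
      apply hFIoo.congr
      filter_upwards [ae_restrict_mem measurableSet_Ioo] with x hx
      simp only [hF, hf', hdw x hx]
    constructor
    · exact hint
    · have hderiv2 : ∀ x ∈ Ioo a b,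
          HasDerivWithinAt (fun t => γ t ^ 2) (f' x) (Ioi x) x := by
        intro x hx
        have hsq : HasDerivAt (fun t => γ t ^ 2) (2 * γ x * deriv γ x) x := by
          have hmul := (hdiff x hx).mul (hdiff x hx)
          have e1 : (γ * γ) = fun t => γ t ^ 2 := by funext t; rw [Pi.mul_apply]; ring
          have e2 : deriv γ x * γ x + γ x * deriv γ x = 2 * γ x * deriv γ x := by ring
          rw [e1, e2] at hmul; exact hmul
        exact hsq.hasDerivWithinAt
      have hc2 : ContinuousOn (fun t => γ t ^ 2) (Icc a b) := hγc.pow 2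
      have key : ∫ x in a..b, f' x = γ b ^ 2 - γ a ^ 2 :=
        integral_eq_sub_of_hasDeriv_right_of_le hab.le hc2 hderiv2 hint
      calc ‖γ b ^ 2 - γ a ^ 2‖ = ‖∫ x in a..b, f' x‖ := by
            rw [key]
        _ ≤ ∫ x in a..b, ‖f' x‖ := intervalIntegral.norm_integral_le_integral_norm hab.le
        _ = ∫ x in a..b, g x := by
            apply intervalIntegral.integral_congr
            intro x _; exact (hgf' x).symm
  -- assemble
  have hn : ∀ k, min k n < n + 1 := fun k => Nat.lt_succ_of_le (min_le_right _ _)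
  set a' : ℕ → ℝ := fun k => s ⟨min k n, hn k⟩ with ha'
  have hkey : ∀ k (hk : k < n), a' k = s (Fin.castSucc ⟨k, hk⟩) ∧ a' (k+1) = s (Fin.succ ⟨k, hk⟩) := by
    intro k hk
    constructor
    · simp only [ha']; congr 1; exact Fin.ext (by simp [Nat.min_eq_left hk.le])
    · simp only [ha']; congr 1; exact Fin.ext (by simp [Nat.min_eq_left hk])
  have hint' : ∀ k < n, IntervalIntegrable g volume (a' k) (a' (k+1)) := by
    intro k hk
    rw [(hkey k hk).1, (hkey k hk).2]
    have := (piece ⟨k, hk⟩).1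
    have hgeq : g = fun x => ‖f' x‖ := funext hgf'
    rw [hgeq]
    exact this.norm
  have hsum := intervalIntegral.sum_integral_adjacent_intervals (μ := volume) (f := g) hint'
  have ha0 : a' 0 = 0 := by
    simp only [ha']
    rw [show (⟨min 0 n, hn 0⟩ : Fin (n+1)) = 0 from Fin.ext (by simp)]
    exact hs0
  have han : a' n = 1 := by
    simp only [ha']
    rw [show (⟨min n n, hn n⟩ : Fin (n+1)) = Fin.last n from Fin.ext (by simp)]
    exact hs1
  have h1 : LELength γ = ∑ k ∈ Finset.range n, ∫ x in a' k..a' (k+1), g x := by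
    rw [LELength]
    rw [ha0, han] at hsum
    exact hsum.symm
  rw [h1]
  have h2 : γ 1 ^ 2 - γ 0 ^ 2 = ∑ k ∈ Finset.range n, (γ (a' (k+1)) ^ 2 - γ (a' k) ^ 2) := by
    rw [Finset.sum_range_sub (fun k => γ (a' k) ^ 2) n, ha0, han]
  rw [h2]
  refine le_trans (norm_sum_le _ _) (Finset.sum_le_sum ?_)
  intro k hk
  rw [Finset.mem_range] at hk
  rw [(hkey k hk).1, (hkey k hk).2]
  exact (piece ⟨k, hk⟩).2

theorem LELength_nonneg (γ : ℝ → ℂ) : 0 ≤ LELength γ := by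
  rw [LELength]
  apply intervalIntegral.integral_nonneg (by norm_num)
  intro t _; positivity

theorem piecewiseC1_of_contDiff (γ : ℝ → ℂ) (h : ContDiff ℝ 1 γ) : PiecewiseC1 γ := by
  refine ⟨h.continuous.continuousOn, 1, fun i => ((i : ℕ) : ℝ), ?_, by simp, by simp, fun i => h.contDiffOn⟩
  intro i j hij
  simp only []
  exact_mod_cast Nat.cast_lt (α := ℝ) |>.mpr hij

theorem bddBelow_dLE_set (A B : ℂ) :
    BddBelow {L : ℝ | ∃ γ : ℝ → ℂ, PiecewiseC1 γ ∧ γ 0 = A ∧ γ 1 = B ∧ LELength γ = L} := by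
  refine ⟨0, ?_⟩
  rintro L ⟨γ, _, _, _, rfl⟩
  exact LELength_nonneg γ

theorem dLE_le (A B : ℂ) (γ : ℝ → ℂ) (h : PiecewiseC1 γ) (h0 : γ 0 = A) (h1 : γ 1 = B) :
    dLE A B ≤ LELength γ :=
  csInf_le (bddBelow_dLE_set A B) ⟨γ, h, h0, h1, rfl⟩

theorem dLE_nonneg (A B : ℂ) : 0 ≤ dLE A B := by
  apply Real.sInf_nonneg
  rintro L ⟨γ, _, _, _, rfl⟩
  exact LELength_nonneg γ

/-- The key lower bound for the log-euclidean distance. -/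
theorem abs_sq_sub_le_dLE (A B : ℂ) : ‖A ^ 2 - B ^ 2‖ ≤ dLE A B := by
  have hne : {L : ℝ | ∃ γ : ℝ → ℂ, PiecewiseC1 γ ∧ γ 0 = A ∧ γ 1 = B ∧ LELength γ = L}.Nonempty := by
    refine ⟨LELength (fun t => A + t • (B - A)), fun t => A + t • (B - A), ?_, by simp, by simp, rfl⟩
    apply piecewiseC1_of_contDiff
    exact contDiff_const.add (contDiff_id.smul contDiff_const)
  apply le_csInf hne
  rintro L ⟨γ, hγ, h0, h1, rfl⟩
  have := le_LELength γ hγ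
  rw [h0, h1] at this
  rwa [norm_sub_rev] at this

/-- Principal square root via exp-log: if `0 < w.re` then `exp (log (w²) / 2) = w`. -/
theorem exp_log_sq_half (w : ℂ) (hw : 0 < w.re) : Complex.exp (Complex.log (w ^ 2) / 2) = w := by
  have hw0 : w ≠ 0 := by
    intro h; rw [h] at hw; simp at hw
  have hw20 : w ^ 2 ≠ 0 := pow_ne_zero 2 hw0
  set E := Complex.exp (Complex.log (w ^ 2) / 2) with hE
  have hE2 : E ^ 2 = w ^ 2 := by
    rw [hE, pow_two, ← Complex.exp_add]
    rw [show Complex.log (w ^ 2) / 2 + Complex.log (w ^ 2) / 2 = Complex.log (w ^ 2) by ring]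
    exact Complex.exp_log hw20
  have him : (Complex.log (w ^ 2) / 2).im = (w ^ 2).arg / 2 := by
    rw [show (2 : ℂ) = ((2 : ℝ) : ℂ) by norm_num]
    rw [Complex.div_ofReal_im, Complex.log_im]
  have hreE : 0 ≤ E.re := by
    rw [hE, Complex.exp_re, him]
    apply mul_nonneg (Real.exp_pos _).le
    apply Real.cos_nonneg_of_mem_Icc
    constructor
    · have := Complex.neg_pi_lt_arg (w ^ 2); linarith
    · have := Complex.arg_le_pi (w ^ 2); linarith
  rcases sq_eq_sq_iff_eq_or_eq_neg.mp hE2 with h | h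
  · exact h
  · exfalso
    rw [h] at hreE
    simp only [Complex.neg_re] at hreE
    linarith

noncomputable def ptA : ℂ := ⟨3/5, 4/5⟩
noncomputable def ptB : ℂ := ⟨4/5, 3/5⟩

theorem ptA_sq : ptA ^ 2 = ⟨-7/25, 24/25⟩ := by
  rw [Complex.ext_iff]; constructor <;> simp [ptA, pow_two, Complex.mul_re, Complex.mul_im] <;> norm_num

theorem ptB_sq : ptB ^ 2 = ⟨7/25, 24/25⟩ := by
  rw [Complex.ext_iff]; constructor <;> simp [ptB, pow_two, Complex.mul_re, Complex.mul_im] <;> norm_num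

noncomputable def sigma' (t : ℝ) : ℂ := ptA ^ 2 + (t : ℂ) * ((14/25 : ℝ) : ℂ)

noncomputable def gpath (t : ℝ) : ℂ := Complex.exp (Complex.log (sigma' t) / 2)

theorem sigma'_im (t : ℝ) : (sigma' t).im = 24/25 := by
  simp [sigma', ptA_sq, Complex.add_im, Complex.mul_im]

theorem sigma'_slit (t : ℝ) : sigma' t ∈ Complex.slitPlane := by
  rw [Complex.mem_slitPlane_iff]
  right; rw [sigma'_im]; norm_num

theorem sigma'_ne (t : ℝ) : sigma' t ≠ 0 := Complex.slitPlane_ne_zero (sigma'_slit t)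

theorem sigma'_deriv (t : ℝ) : HasDerivAt sigma' (((14/25 : ℝ) : ℂ)) t := by
  have h1 : HasDerivAt (fun t : ℝ => (t : ℂ)) 1 t := by
    exact Complex.ofRealCLM.hasDerivAt (x := t)
  have h2 := (h1.mul_const (((14/25 : ℝ) : ℂ))).const_add (ptA ^ 2)
  rw [show sigma' = fun t : ℝ => ptA ^ 2 + (t : ℂ) * ((14/25 : ℝ) : ℂ) from rfl]
  simpa using h2

theorem gpath_deriv (t : ℝ) :
    HasDerivAt gpath (gpath t * (((14/25 : ℝ) : ℂ) / sigma' t / 2)) t := by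
  have h1 := (sigma'_deriv t).clog_real (sigma'_slit t)
  have h2 := h1.div_const 2
  have h3 := h2.cexp
  exact h3

theorem gpath_sq (t : ℝ) : gpath t ^ 2 = sigma' t := by
  rw [gpath, pow_two, ← Complex.exp_add]
  rw [show Complex.log (sigma' t) / 2 + Complex.log (sigma' t) / 2 = Complex.log (sigma' t) by ring]
  exact Complex.exp_log (sigma'_ne t)

theorem gpath_zero : gpath 0 = ptA := by
  have h : sigma' 0 = ptA ^ 2 := by simp [sigma']
  rw [gpath, h]
  exact exp_log_sq_half ptA (by rw [ptA]; norm_num)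

theorem gpath_one : gpath 1 = ptB := by
  have h : sigma' 1 = ptB ^ 2 := by
    rw [sigma', ptA_sq, ptB_sq, Complex.ext_iff]
    constructor <;> simp [Complex.add_re, Complex.add_im, Complex.mul_re, Complex.mul_im] <;> norm_num
  rw [gpath, h]
  exact exp_log_sq_half ptB (by rw [ptB]; norm_num)

theorem gpath_contDiff : ContDiff ℝ 1 gpath := by
  rw [contDiff_one_iff_deriv]
  constructor
  · exact fun t => (gpath_deriv t).differentiableAt
  · have hde : deriv gpath = fun t => gpath t * (((14/25 : ℝ) : ℂ) / sigma' t / 2) :=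
      funext fun t => (gpath_deriv t).deriv
    rw [hde]
    have hgc : Continuous gpath :=
      Differentiable.continuous (fun t => (gpath_deriv t).differentiableAt)
    have hsc : Continuous sigma' := by
      unfold sigma'
      exact continuous_const.add (Complex.continuous_ofReal.mul continuous_const)
    exact hgc.mul ((continuous_const.div hsc (fun t => sigma'_ne t)).div_const 2)

theorem LELength_gpath : LELength gpath = 14/25 := by
  have hpt : ∀ t : ℝ, 2 * ‖gpath t‖ * ‖deriv gpath t‖ = 14/25 := by
    intro t
    rw [(gpath_deriv t).deriv]
    set a := ‖gpath t‖ with ha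
    have ha2 : a * a = ‖sigma' t‖ := by
      rw [ha, ← norm_mul, ← pow_two, gpath_sq]
    have hs : 0 < ‖sigma' t‖ := norm_pos_iff.mpr (sigma'_ne t)
    rw [norm_mul, norm_div, norm_div, Complex.norm_two, Complex.norm_real, Real.norm_eq_abs]
    rw [_root_.abs_of_nonneg (by norm_num : (0:ℝ) ≤ 14/25)]
    rw [← ha]
    calc 2 * a * (a * (14/25 / ‖sigma' t‖ / 2))
        = (a * a) * (14/25 / ‖sigma' t‖) := by ring
      _ = ‖sigma' t‖ * (14/25 / ‖sigma' t‖) := by rw [ha2]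
      _ = 14/25 := by field_simp
  rw [LELength]
  rw [intervalIntegral.integral_congr (g := fun _ => (14/25 : ℝ)) (fun x _ => hpt x)]
  simp

theorem dLE_ptA_ptB_le : dLE ptA ptB ≤ 14/25 := by
  have := dLE_le ptA ptB gpath (piecewiseC1_of_contDiff gpath gpath_contDiff) gpath_zero gpath_one
  rwa [LELength_gpath] at this

theorem abs_ptA : ‖ptA‖ = 1 := by
  have h : ‖ptA‖ ^ 2 = 1 := by
    rw [Complex.sq_norm, Complex.normSq_apply, ptA]; norm_num
  nlinarith [norm_nonneg ptA]

theorem abs_ptB : ‖ptB‖ = 1 := by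
  have h : ‖ptB‖ ^ 2 = 1 := by
    rw [Complex.sq_norm, Complex.normSq_apply, ptB]; norm_num
  nlinarith [norm_nonneg ptB]

theorem ptA_ne_ptB : ptA ≠ ptB := by
  intro h
  rw [Complex.ext_iff, ptA, ptB] at h
  norm_num at h

/-- Axiom I-2bis fails in the log-euclidean plane: there are a log-euclidean
line `L` and distinct points `A, B ∈ L` such that the image of the geodesic
from `A` to `B` is not contained in `L`. -/
theorem logLine_geodesic_not_contained :
    ∃ (L : Set ℂ) (A B : ℂ), IsLogLine L ∧ A ∈ L ∧ B ∈ L ∧ A ≠ B ∧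
      ∀ γ : ℝ → ℂ, IsLEGeodesic A B γ →
        ¬ (γ '' Set.Icc (0:ℝ) (dLE A B) ⊆ L) := by
  refine ⟨{z : ℂ | ∃ t : ℝ, 0 ≤ t ∧ z = t • ptA} ∪ {z : ℂ | ∃ t : ℝ, 0 ≤ t ∧ z = t • ptB},
    ptA, ptB, ?_, ?_, ?_, ptA_ne_ptB, ?_⟩
  · right
    exact ⟨ptA, ptB, ptA_ne_ptB, abs_ptA, abs_ptB, rfl⟩
  · exact Or.inl ⟨1, zero_le_one, (one_smul ℝ ptA).symm⟩
  · exact Or.inr ⟨1, zero_le_one, (one_smul ℝ ptB).symm⟩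
  · rintro γ ⟨hγ0, hγd, hgeo⟩ hsub
    set d := dLE ptA ptB with hd
    have hd0 : 0 ≤ d := dLE_nonneg _ _
    have hdle : d ≤ 14/25 := dLE_ptA_ptB_le
    have hmem : d/2 ∈ Set.Icc (0:ℝ) d := ⟨by linarith, by linarith⟩
    have h0mem : (0:ℝ) ∈ Set.Icc (0:ℝ) d := ⟨le_rfl, hd0⟩
    have hdmem : d ∈ Set.Icc (0:ℝ) d := ⟨hd0, le_rfl⟩
    set z := γ (d/2) with hz
    have h1 : dLE ptA z = d/2 := by
      have h := hgeo 0 h0mem (d/2) hmem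
      rw [hγ0] at h
      rw [h, zero_sub, abs_neg, _root_.abs_of_nonneg (by linarith : (0:ℝ) ≤ d/2)]
    have h2 : dLE z ptB = d/2 := by
      have h := hgeo (d/2) hmem d hdmem
      rw [hγd] at h
      rw [h, _root_.abs_of_nonpos (by linarith : d/2 - d ≤ 0)]
      ring
    have k1 : ‖ptA ^ 2 - z ^ 2‖ ≤ 7/25 :=
      le_trans (abs_sq_sub_le_dLE ptA z) (by rw [h1]; linarith)
    have k2 : ‖z ^ 2 - ptB ^ 2‖ ≤ 7/25 :=
      le_trans (abs_sq_sub_le_dLE z ptB) (by rw [h2]; linarith)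
    have n1 : Complex.normSq (ptA ^ 2 - z ^ 2) ≤ (7/25)^2 := by
      rw [← Complex.sq_norm]
      exact pow_le_pow_left₀ (norm_nonneg _) k1 2
    have n2 : Complex.normSq (z ^ 2 - ptB ^ 2) ≤ (7/25)^2 := by
      rw [← Complex.sq_norm]
      exact pow_le_pow_left₀ (norm_nonneg _) k2 2
    have hzL := hsub ⟨d/2, hmem, rfl⟩
    rcases hzL with ⟨t, ht0, htz⟩ | ⟨t, ht0, htz⟩
    · have hz2 : z ^ 2 = ((t^2 : ℝ) : ℂ) * ptA ^ 2 := by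
        rw [hz, htz, Complex.real_smul]; push_cast; ring
      rw [hz2, Complex.normSq_apply] at n1 n2
      simp only [ptA_sq, ptB_sq, Complex.sub_re, Complex.sub_im, Complex.mul_re, Complex.mul_im,
        Complex.ofReal_re, Complex.ofReal_im] at n1 n2
      norm_num at n1 n2
      nlinarith [sq_nonneg t, sq_nonneg (t*t), sq_nonneg (t*t-1), sq_nonneg (t*t+1)]
    · have hz2 : z ^ 2 = ((t^2 : ℝ) : ℂ) * ptB ^ 2 := by
        rw [hz, htz, Complex.real_smul]; push_cast; ring
      rw [hz2, Complex.normSq_apply] at n1 n2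
      simp only [ptA_sq, ptB_sq, Complex.sub_re, Complex.sub_im, Complex.mul_re, Complex.mul_im,
        Complex.ofReal_re, Complex.ofReal_im] at n1 n2
      norm_num at n1 n2
      nlinarith [sq_nonneg t, sq_nonneg (t*t), sq_nonneg (t*t-1), sq_nonneg (t*t+1)]
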